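/- arXiv:2603.15613 — 4 statements merged into one kernel-verified Lean document; each statement's English description precedes it below -/
import Mathlib

section
/- Let 𝒰_I, 𝒰_J be ultrafilters on I and J, u : A → B injective with |A| > 1, and h : J → I a map. If the map e sending [f]_{𝒰_I} to [u ∘ f ∘ h]_{𝒰_J} is well-defined and injective from (I → A)/𝒰_I to (J → B)/𝒰_J, then 𝒰_I is the pushforward of 𝒰_J along h (i.e. X ∈ 𝒰_I iff h⁻¹[X] ∈ 𝒰_J). -/
/-- If `|A| > 1`, `u : A → B` is injective, and `[f] ↦ [u ∘ f ∘ h]` is a well-defined injection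
from `A^I/𝒰_I` to `B^J/𝒰_J`, then `𝒰_I` is the pushforward of `𝒰_J` along `h`. -/
theorem stmt5 {A B I J : Type*} (UI : Ultrafilter I) (UJ : Ultrafilter J)
    (u : A → B) (hu : Function.Injective u) (hA : ∃ a b : A, a ≠ b)
    (h : J → I)
    (e : Filter.Germ (UI : Filter I) A → Filter.Germ (UJ : Filter J) B)
    (he : ∀ f : I → A, e (↑f) = ↑(u ∘ f ∘ h))
    (hinj : Function.Injective e) :
    ∀ X : Set I, X ∈ UI ↔ h ⁻¹' X ∈ UJ := by
  intro X
  obtain ⟨a, b, hab⟩ := hA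
  classical
  set f : I → A := fun i => if i ∈ X then a else b with hf
  set g : I → A := fun _ => a with hg
  have hfa : ∀ i, f i = a ↔ i ∈ X := by
    intro i
    by_cases hi : i ∈ X <;> simp [hf, hi, hab, hab.symm]
  constructor
  · intro hX
    have hfg : (↑f : Filter.Germ (UI : Filter I) A) = ↑g := by
      rw [Filter.Germ.coe_eq]
      filter_upwards [hX] with i hi
      simp [hf, hg, hi]
    have := congrArg e hfg
    rw [he f, he g, Filter.Germ.coe_eq] at this
    have hm : {j | (u ∘ f ∘ h) j = (u ∘ g ∘ h) j} ∈ UJ := this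
    have : {j | (u ∘ f ∘ h) j = (u ∘ g ∘ h) j} ⊆ h ⁻¹' X := by
      intro j hj
      have : f (h j) = a := hu hj
      exact (hfa (h j)).mp this
    exact UJ.toFilter.mem_of_superset hm this
  · intro hX
    have hfg : e ↑f = e ↑g := by
      rw [he f, he g, Filter.Germ.coe_eq]
      filter_upwards [hX] with j hj
      simp [hf, hg, Set.mem_preimage.mp hj]
    have := hinj hfg
    rw [Filter.Germ.coe_eq] at this
    have : {i | f i = g i} ∈ UI := this
    have hsub : {i | f i = g i} ⊆ X := fun i hi => (hfa i).mp hi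
    exact UI.toFilter.mem_of_superset this hsub
end

section
/- Let 𝒜 be a linear order with no maximum, let B ⊆ A^A be unbounded (no single h : A → A eventually dominates every member of B), and let B = ⋃_{τ < cof(𝒜)} B_τ be a decomposition into cof(𝒜)-many pieces; then some B_τ is unbounded. -/
universe u

/-- A family `B` of functions `A → A` is unbounded if no single function eventually dominates
every member of `B`. -/
def Unbdd {A : Type u} [LinearOrder A] (B : Set (A → A)) : Prop :=
  ¬ ∃ h : A → A, ∀ g ∈ B, ∃ j : A, ∀ k : A, j < k → g k < h k

/-- The cofinality of a relation `r`: the least cardinality of an `r`-cofinal subset. -/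
noncomputable def rcofin {α : Type u} (r : α → α → Prop) : Cardinal.{u} :=
  ⨅ S : {S : Set α // ∀ a : α, ∃ b ∈ S, r a b}, Cardinal.mk S.1

/-- Sets of cardinality less than `rcofin (≤)` are strictly bounded above. -/
lemma small_bdd {A : Type u} [LinearOrder A] (X : Set A)
    (hX : Cardinal.mk X < rcofin ((· ≤ ·) : A → A → Prop)) :
    ∃ a : A, ∀ x ∈ X, x < a := by
  by_contra h
  push_neg at h
  have hcof : ∀ a : A, ∃ b ∈ X, a ≤ b := by
    intro a
    obtain ⟨x, hx, hx2⟩ := h a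
    exact ⟨x, hx, hx2⟩
  have : rcofin ((· ≤ ·) : A → A → Prop) ≤ Cardinal.mk X :=
    ciInf_le' _ (⟨X, hcof⟩ : {S : Set A // ∀ a : A, ∃ b ∈ S, a ≤ b})
  exact absurd hX (not_lt.mpr this)

/-- The infimum defining `rcofin (≤)` is attained. -/
lemma rcofin_attained {A : Type u} [LinearOrder A] :
    ∃ S : Set A, (∀ a : A, ∃ b ∈ S, a ≤ b) ∧
      Cardinal.mk S = rcofin ((· ≤ ·) : A → A → Prop) := by
  have hne : Nonempty {S : Set A // ∀ a : A, ∃ b ∈ S, a ≤ b} :=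
    ⟨⟨Set.univ, fun a => ⟨a, Set.mem_univ a, le_refl a⟩⟩⟩
  have h : rcofin ((· ≤ ·) : A → A → Prop) ∈
      Set.range (fun S : {S : Set A // ∀ a : A, ∃ b ∈ S, a ≤ b} => Cardinal.mk S.1) :=
    csInf_mem (Set.range_nonempty _)
  obtain ⟨⟨S, hS⟩, hval⟩ := h
  exact ⟨S, hS, hval⟩

lemma rcofin_infinite {A : Type u} [LinearOrder A] [NoMaxOrder A] [Nonempty A] :
    Cardinal.aleph0 ≤ rcofin ((· ≤ ·) : A → A → Prop) := by
  by_contra h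
  push_neg at h
  obtain ⟨S, hS, hval⟩ := rcofin_attained (A := A)
  have hfin : S.Finite := by
    rw [← Cardinal.lt_aleph0_iff_set_finite, hval]; exact h
  obtain ⟨a0⟩ := ‹Nonempty A›
  obtain ⟨b0, hb0, _⟩ := hS a0
  obtain ⟨m, hm, hmax⟩ := hfin.exists_maximalFor id S ⟨b0, hb0⟩
  obtain ⟨a, ha⟩ := exists_gt m
  obtain ⟨b, hb, hab⟩ := hS a
  have hbm : b ≤ m := by
    rcases le_or_gt b m with h' | h'
    · exact h'
    · exact hmax hb h'.le
  exact absurd (hab.trans hbm) (not_le.mpr ha)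

/-- If `B ⊆ A^A` is unbounded and is decomposed into `cof(𝒜)`-many pieces, then some piece is
unbounded. -/
theorem stmt10 {A : Type u} [LinearOrder A] [NoMaxOrder A]
    {ι : Type u} (hι : Cardinal.mk ι = rcofin ((· ≤ ·) : A → A → Prop))
    (B : Set (A → A)) (hB : Unbdd B)
    (Bf : ι → Set (A → A)) (hdec : ⋃ τ, Bf τ = B) :
    ∃ τ : ι, Unbdd (Bf τ) := by
  classical
  -- B is nonempty
  have hBne : B.Nonempty := by
    rcases Set.eq_empty_or_nonempty B with h | h
    · exfalso; exact hB ⟨id, by simp [h]⟩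
    · exact h
  obtain ⟨g₀, hg₀⟩ := hBne
  rcases isEmpty_or_nonempty A with hA | hA
  · -- trivial case: A empty, then no j can exist
    rw [← hdec] at hg₀
    obtain ⟨τ, hτ⟩ := Set.mem_iUnion.mp hg₀
    refine ⟨τ, ?_⟩
    rintro ⟨h, hh⟩
    obtain ⟨j, -⟩ := hh g₀ hτ
    exact hA.false j
  by_contra hcon
  push_neg at hcon
  simp only [Unbdd, not_not] at hcon
  choose H hH using hcon
  set κ := rcofin ((· ≤ ·) : A → A → Prop) with hκ
  have hinf : Cardinal.aleph0 ≤ κ := rcofin_infinite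
  obtain ⟨S, hS, hSval⟩ := rcofin_attained (A := A)
  -- well-ordered index type
  set ι' := κ.ord.ToType with hι'
  have hmkι' : Cardinal.mk ι' = κ := by
    rw [hι', Cardinal.mk_toType, Cardinal.card_ord]
  -- bijections
  obtain ⟨F⟩ : Nonempty (ι' ≃ ι) := Cardinal.eq.mp (by rw [hmkι', hι])
  obtain ⟨e⟩ : Nonempty (ι' ≃ S) := Cardinal.eq.mp (by rw [hmkι', hSval])
  -- cardinality of initial segments
  have hIio : ∀ τ : ι', Cardinal.mk (Set.Iio τ) < κ := fun τ =>
    Cardinal.mk_Iio_ord_toType τ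
  have hIic : ∀ τ : ι', Cardinal.mk (Set.Iic τ) < κ := by
    intro τ
    have h1 : Cardinal.mk (Set.Iic τ) ≤ Cardinal.mk (Set.Iio τ) + 1 := by
      rw [← Set.Iio_insert]
      exact (Cardinal.mk_insert_le).trans le_rfl
    exact lt_of_le_of_lt h1
      (Cardinal.add_lt_of_lt hinf (hIio τ) (lt_of_lt_of_le Cardinal.one_lt_aleph0 hinf))
  -- strict upper bounds for initial segments of e
  have hbd : ∀ τ : ι', ∃ a : A, ∀ ρ : ι', ρ ≤ τ → (e ρ : A) < a := by
    intro τ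
    have hsmall : Cardinal.mk ((fun ρ : ι' => (e ρ : A)) '' Set.Iic τ) < κ :=
      lt_of_le_of_lt Cardinal.mk_image_le (hIic τ)
    obtain ⟨a, ha⟩ := small_bdd _ hsmall
    exact ⟨a, fun ρ hρ => ha _ ⟨ρ, hρ, rfl⟩⟩
  choose bnd hbnd using hbd
  -- the "small" index sets
  set D : A → Set ι' := fun k => {τ : ι' | ∀ ρ : ι', ρ ≤ τ → (e ρ : A) < k} with hD
  have hDsmall : ∀ k : A, Cardinal.mk (D k) < κ := by
    intro k
    obtain ⟨k', hk'⟩ := exists_gt k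
    obtain ⟨b, hb, hkb⟩ := hS k'
    set τ₀ := e.symm ⟨b, hb⟩ with hτ₀
    have hτ₀n : τ₀ ∉ D k := by
      intro hmem
      have := hmem τ₀ le_rfl
      rw [hτ₀, Equiv.apply_symm_apply] at this
      exact absurd (hkb.trans_lt this) (not_lt.mpr hk'.le)
    have hsub : D k ⊆ Set.Iio τ₀ := by
      intro τ hτ
      by_contra hge
      simp only [Set.mem_Iio] at hge
      exact hτ₀n (fun ρ hρ => hτ ρ (hρ.trans (not_lt.mp (by simpa using hge))))
    exact lt_of_le_of_lt (Cardinal.mk_le_mk_of_subset hsub) (hIio τ₀)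
  -- the dominating function
  have hZ : ∀ k : A, ∃ z : A, ∀ τ ∈ D k, H (F τ) k < z := by
    intro k
    have hsmall : Cardinal.mk ((fun τ : ι' => H (F τ) k) '' D k) < κ :=
      lt_of_le_of_lt Cardinal.mk_image_le (hDsmall k)
    obtain ⟨z, hz⟩ := small_bdd _ hsmall
    exact ⟨z, fun τ hτ => hz _ ⟨τ, hτ, rfl⟩⟩
  choose h hh using hZ
  -- h dominates every member of B : contradiction
  apply hB
  refine ⟨h, ?_⟩
  intro g hg
  rw [← hdec] at hg
  obtain ⟨τι, hτι⟩ := Set.mem_iUnion.mp hg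
  obtain ⟨j, hj⟩ := hH τι g hτι
  set τ := F.symm τι with hτ
  refine ⟨max j (bnd τ), fun k hk => ?_⟩
  have hk1 : j < k := lt_of_le_of_lt (le_max_left _ _) hk
  have hk2 : bnd τ < k := lt_of_le_of_lt (le_max_right _ _) hk
  have hτD : τ ∈ D k := fun ρ hρ => (hbnd τ ρ hρ).trans hk2
  have := hh k τ hτD
  rw [hτ, Equiv.apply_symm_apply] at this
  exact (hj k hk1).trans this
end

section
/- If 𝒜 is a linear order unbounded above, then cof(𝒜) < 𝔟_𝒜, where 𝔟_𝒜 is the least cardinality of a subset of A^A that is unbounded under eventual domination. -/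
/-!
Let `κ = cof A` and index both a cofinal set `(s i)` and a family of at most `κ` functions
`(g i)` by the initial ordinal of `κ`, whose proper initial segments have fewer than `κ`
elements. Fewer than `κ` points of `A` are strictly bounded, so for `k ≤ s i₀` one may take
`h k` above all `g i k` with `i ≤ i₀`; and `g i < h` beyond a bound of the `s j` with `j < i`,
since there `i₀ < i` is impossible. As the family of all functions is unbounded, `κ < 𝔟_A`.
-/

universe u

/-- The bounding number `𝔟_𝒜`: the least cardinality of an unbounded family in `A^A`. -/
noncomputable def bcard (A : Type u) [LinearOrder A] : Cardinal.{u} :=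
  ⨅ B : {B : Set (A → A) // Unbdd B}, Cardinal.mk B.1

open Cardinal Set Order

theorem rcofin_le_eq_cof (A : Type u) [Preorder A] :
    rcofin ((· ≤ ·) : A → A → Prop) = cof A :=
  rfl

theorem unbdd_univ {A : Type u} [LinearOrder A] [NoMaxOrder A] : Unbdd (univ : Set (A → A)) := by
  rintro ⟨h, hh⟩
  obtain ⟨j, hj⟩ := hh h (mem_univ h)
  obtain ⟨k, hk⟩ := exists_gt j
  exact (hj k hk).false

theorem exists_gt_of_mk_lt_cof {A : Type u} [LinearOrder A] {t : Set A} (ht : #t < cof A) :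
    ∃ u, ∀ a ∈ t, a < u :=
  not_isCofinal_iff.1 fun hcof => (cof_le hcof).not_gt ht

theorem exists_eventually_dominating {A ι : Type u} [LinearOrder A] [LinearOrder ι]
    (hι : ∀ i : ι, #(Iic i) < cof A) {s : ι → A} (hs : IsCofinal (range s)) (g : ι → A → A) :
    ∃ h : A → A, ∀ i, ∃ j, ∀ k, j < k → g i k < h k := by
  have hcof : ∀ k, ∃ i, k ≤ s i := fun k => by
    obtain ⟨_, ⟨i, rfl⟩, hi⟩ := hs k
    exact ⟨i, hi⟩
  choose idx hidx using hcof
  have hbound : ∀ k, ∃ u, ∀ i ≤ idx k, g i k < u := fun k => by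
    obtain ⟨u, hu⟩ := exists_gt_of_mk_lt_cof
      (mk_range_le.trans_lt (hι (idx k)) : #(range fun i : Iic (idx k) => g i k) < cof A)
    exact ⟨u, fun i hi => hu _ ⟨⟨i, hi⟩, rfl⟩⟩
  choose h hh using hbound
  refine ⟨h, fun i => ?_⟩
  obtain ⟨u, hu⟩ := exists_gt_of_mk_lt_cof
    ((mk_image_le.trans (mk_le_mk_of_subset Iio_subset_Iic_self)).trans_lt (hι i) :
      #(s '' Iio i) < cof A)
  refine ⟨u, fun k hk => hh k i (not_lt.1 fun hlt => ?_)⟩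
  exact ((hidx k).trans_lt ((hu _ (mem_image_of_mem s hlt)).trans hk)).false

theorem mk_Iic_ord_toType_lt {c : Cardinal.{u}} (hc : ℵ₀ ≤ c) (i : c.ord.ToType) :
    #(Iic i) < c := by
  simpa using mk_Iic_lt i (by simp [Ordinal.type_toType]) (by simpa using hc)

theorem exists_isCofinal_range_cof_ord_toType (A : Type u) [Preorder A] :
    ∃ s : (cof A).ord.ToType → A, IsCofinal (range s) := by
  obtain ⟨S, hS, hSmk⟩ := exists_cof_eq A
  obtain ⟨e⟩ : Nonempty ((cof A).ord.ToType ≃ S) := Cardinal.eq.1 (by simp [hSmk])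
  refine ⟨fun i => e i, ?_⟩
  rwa [range_comp' Subtype.val e, e.range_eq_univ, image_univ, Subtype.range_coe]

theorem not_unbdd_of_mk_le_cof {A : Type u} [LinearOrder A] [NoMaxOrder A] {B : Set (A → A)}
    (hB : #B ≤ cof A) : ¬Unbdd B := by
  rcases B.eq_empty_or_nonempty with rfl | hBne
  · exact fun hU => hU ⟨id, fun _ hg => hg.elim⟩
  have : Nonempty B := hBne.to_subtype
  have : Nonempty A := cof_ne_zero_iff.1 fun h0 => mk_ne_zero B (le_zero_iff.1 (h0 ▸ hB))
  obtain ⟨s, hs⟩ := exists_isCofinal_range_cof_ord_toType A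
  obtain ⟨f⟩ : Nonempty (B ↪ (cof A).ord.ToType) := Cardinal.le_def _ _ |>.1 (by simpa using hB)
  obtain ⟨h, hh⟩ := exists_eventually_dominating (mk_Iic_ord_toType_lt aleph0_le_cof) hs
    fun i => ((Function.invFun f i : B) : A → A)
  refine fun hU => hU ⟨h, fun g hg => ?_⟩
  simpa [Function.leftInverse_invFun f.injective ⟨g, hg⟩] using hh (f ⟨g, hg⟩)

/-- If `𝒜` is a linear order unbounded above, then `cof(𝒜) < 𝔟_𝒜`. -/
theorem stmt11 {A : Type u} [LinearOrder A] [NoMaxOrder A] :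
    rcofin ((· ≤ ·) : A → A → Prop) < bcard A := by
  have : Nonempty {B : Set (A → A) // Unbdd B} := ⟨⟨univ, unbdd_univ⟩⟩
  obtain ⟨⟨B, hB⟩, hBmk⟩ := ciInf_mem fun B : {B : Set (A → A) // Unbdd B} => #B.1
  rw [bcard, ← hBmk, rcofin_le_eq_cof]
  exact not_le.1 fun hle => not_unbdd_of_mk_le_cof hle hB
end

section
/- Let 𝒜 = ⟨A, <⟩ be a linear order with no maximum and 𝒰 a tails ultrafilter over A (containing every final segment {j : k ≤ j}). If B ⊆ A^A is unbounded under eventual domination, then the images [f]_𝒰 for f ∈ B are cofinal-witnessing: in particular 𝔟_𝒜 ≤ cof(A^A/𝒰), where A^A/𝒰 is ordered by [f] < [g] iff {j : f(j) < g(j)} ∈ 𝒰. -/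
universe u

/- A cofinal set `S` of germs has a set of representatives of size at most `#S`. It is unbounded:
a bound `h` lies below some `[g]` with `g` a representative, i.e. `h ≤ g` on a set in the
filter, while `g < h` on a final segment, and the filter contains every final segment. -/

open Filter

section

variable {A : Type u} [LinearOrder A] [NoMaxOrder A] {f : Filter A} [f.NeBot]

theorem not_eventually_lt_of_germ_le (htails : ∀ k : A, ∀ᶠ j in f, k ≤ j) {g h : A → A}
    (hle : (h : Germ f A) ≤ g) : ¬ ∃ j : A, ∀ k : A, j < k → g k < h k := by
  rintro ⟨j, hj⟩
  have hlt : ∀ᶠ k in f, g k < h k :=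
    ((tendsto_atTop.2 htails).eventually_gt_atTop j).mono hj
  obtain ⟨k, hk_le, hk_lt⟩ := (Germ.coe_le.1 hle).and hlt |>.exists
  exact hk_le.not_gt hk_lt

theorem unbdd_of_forall_exists_germ_le (htails : ∀ k : A, ∀ᶠ j in f, k ≤ j) {B : Set (A → A)}
    (hB : ∀ h : A → A, ∃ g ∈ B, (h : Germ f A) ≤ g) : Unbdd B := by
  rintro ⟨h, hdom⟩
  obtain ⟨g, hgB, hle⟩ := hB h
  exact not_eventually_lt_of_germ_le htails hle (hdom g hgB)

end

theorem bcard_le_rcofin_germ {A : Type u} [LinearOrder A] [NoMaxOrder A] (f : Filter A) [f.NeBot]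
    (htails : ∀ k : A, ∀ᶠ j in f, k ≤ j) :
    bcard A ≤ rcofin ((· ≤ ·) : Germ f A → Germ f A → Prop) := by
  have : Nonempty {S : Set (Germ f A) // ∀ a, ∃ b ∈ S, a ≤ b} :=
    ⟨⟨Set.univ, fun a => ⟨a, trivial, le_rfl⟩⟩⟩
  refine le_ciInf fun ⟨S, hS⟩ => ?_
  have hunbdd : Unbdd (Quotient.out '' S) := by
    refine unbdd_of_forall_exists_germ_le htails fun h => ?_
    obtain ⟨b, hbS, hb⟩ := hS h
    have hrep : ((b.out : A → A) : Germ f A) = b := Quotient.out_eq b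
    exact ⟨b.out, Set.mem_image_of_mem _ hbS, hb.trans hrep.ge⟩
  calc bcard A ≤ Cardinal.mk (Quotient.out '' S) :=
        ciInf_le' _ (⟨_, hunbdd⟩ : {B : Set (A → A) // Unbdd B})
    _ ≤ Cardinal.mk S := Cardinal.mk_image_le

/-- If `𝒜` has no maximum and `𝒰` is a tails ultrafilter over `A`, then
`𝔟_𝒜 ≤ cof(A^A/𝒰)`. -/
theorem stmt12 {A : Type u} [LinearOrder A] [NoMaxOrder A] (U : Ultrafilter A)
    (htails : ∀ k : A, {j : A | k ≤ j} ∈ U) :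
    bcard A ≤ rcofin ((· ≤ ·) : Filter.Germ (U : Filter A) A → Filter.Germ (U : Filter A) A → Prop) :=
  bcard_le_rcofin_germ (U : Filter A) htails
end
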